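/- arXiv:1409.8219 — 2 statements merged into one kernel-verified Lean document; each statement's English description precedes it below -/
import Mathlib

section
/- Let L ≥ 0, p₁ ∈ (0,1], and let f : ℝ → (-∞,∞] be a non-decreasing convex function with f(0) = 0, f(p) ≥ ℓ_L(p) for every p ≥ p₁, and f(p) ≤ ℓ_L(p) for every p ≤ p₁; set q₁ := L/p₁ and ψ := co(f ∨ ℓ_L). Then the subdifferential of ψ at 0 equals [0, q₁], and the subdifferential of ψ at p₁ equals [q₁, D⁺f(p₁)] if D⁺f(p₁) < +∞ and equals [q₁, +∞) otherwise. -/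
open scoped Classical
noncomputable section

/-- Fenchel conjugate (Legendre transform) of an extended-real-valued function:
`fconj f q = sup_{p ∈ ℝ} (p*q - f p)`. -/
def fconj (f : ℝ → EReal) (q : ℝ) : EReal := ⨆ p : ℝ, ((p * q : ℝ) : EReal) - f p

/-- Convexity for extended-real-valued functions on `ℝ`. -/
def ConvexE (f : ℝ → EReal) : Prop :=
  ∀ x y t : ℝ, 0 ≤ t → t ≤ 1 →
    f (t * x + (1 - t) * y) ≤ (t : EReal) * f x + ((1 - t : ℝ) : EReal) * f y

/-- The payoff function `ℓ_L`: `0` for `p ≤ 0`, `L` for `0 < p ≤ 1`, `+∞` for `p > 1`. -/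
def ellL (L : ℝ) (p : ℝ) : EReal :=
  if p ≤ 0 then 0 else if p ≤ 1 then (L : EReal) else ⊤

/-- Right derivative (as an extended real) of `f` at `p`, i.e. the infimum of the
right slopes `(f (p+h) - f p)/h` over `h > 0`. -/
def rightDE (f : ℝ → EReal) (p : ℝ) : EReal :=
  ⨅ h : {h : ℝ // 0 < h}, ((h.1⁻¹ : ℝ) : EReal) * (f (p + h.1) - f p)

/-- Left derivative (as an extended real) of `f` at `p`, i.e. the supremum of the
left slopes `(f p - f (p-h))/h` over `h > 0`. -/
def leftDE (f : ℝ → EReal) (p : ℝ) : EReal :=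
  ⨆ h : {h : ℝ // 0 < h}, ((h.1⁻¹ : ℝ) : EReal) * (f p - f (p - h.1))

/-- Closed convex envelope of `f`: the pointwise supremum of all lower semicontinuous
convex minorants of `f` (the largest closed convex function majorized by `f`). -/
def coE (f : ℝ → EReal) (p : ℝ) : EReal :=
  ⨆ g : {g : ℝ → EReal // ConvexE g ∧ LowerSemicontinuous g ∧ ∀ x, g x ≤ f x}, g.1 p

/-- Subdifferential of an extended-real-valued function at a point. -/
def subdiffE (f : ℝ → EReal) (p : ℝ) : Set ℝ :=
  {q : ℝ | ∀ r : ℝ, f p + ((q * (r - p) : ℝ) : EReal) ≤ f r}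

/-!
The subgradients of ψ = co (f ∨ ℓ_L) at 0 and at p₁ are read off affine minorants. Convexity and
f 0 = 0 give f r ≥ q₁ r for r ≥ p₁, so every line through the origin with slope in [0, q₁] lies
below f ∨ ℓ_L; hence ψ agrees with f ∨ ℓ_L at 0 and at p₁, and q is a subgradient of ψ there exactly
when the line of slope q through that point lies below f ∨ ℓ_L. Testing that line on r ≤ 0, on
(0, p₁] and on r > p₁ gives 0 ≤ q ≤ q₁ at 0, while at p₁ the point r = 0 gives q ≥ q₁ and the points
r > p₁ give q ≤ D⁺f(p₁).
-/

lemma EReal.coe_le_coe_mul_iff {a t : ℝ} (ht : 0 < t) (x : EReal) :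
    (a : EReal) ≤ t * x ↔ ((a / t : ℝ) : EReal) ≤ x := by
  induction x with
  | bot => simp [EReal.coe_mul_bot_of_pos ht]
  | coe x => norm_cast; rw [div_le_iff₀' ht]
  | top => simp [EReal.coe_mul_top_of_pos ht]

lemma le_rightDE_iff {f : ℝ → EReal} {p a : ℝ} (hfp : f p = a) (q : ℝ) :
    (q : EReal) ≤ rightDE f p ↔ ∀ h : ℝ, 0 < h → ((a + q * h : ℝ) : EReal) ≤ f (p + h) := by
  have slope_iff : ∀ h : ℝ, 0 < h →
      ((q : EReal) ≤ ((h⁻¹ : ℝ) : EReal) * (f (p + h) - a) ↔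
        ((a + q * h : ℝ) : EReal) ≤ f (p + h)) := fun h hh => by
    rw [EReal.coe_le_coe_mul_iff (inv_pos.2 hh), EReal.le_sub_iff_add_le (by simp) (by simp),
      div_inv_eq_mul, ← EReal.coe_add, add_comm]
  simp only [rightDE, le_iInf_iff, Subtype.forall, hfp]
  exact forall₂_congr slope_iff

lemma ConvexE.map_mul_le_of_map_zero {f : ℝ → EReal} (hf : ConvexE f) (h0 : f 0 = 0) {t : ℝ}
    (ht0 : 0 ≤ t) (ht1 : t ≤ 1) (r : ℝ) : f (t * r) ≤ t * f r := by
  simpa [h0] using hf r 0 t ht0 ht1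

lemma ConvexE.div_mul_le_of_map_zero {f : ℝ → EReal} (hf : ConvexE f) (h0 : f 0 = 0)
    {p r a : ℝ} (hp : 0 < p) (hfp : f p = a) (hpr : p ≤ r) : ((a / p * r : ℝ) : EReal) ≤ f r := by
  have hr : 0 < r := hp.trans_le hpr
  have h := hf.map_mul_le_of_map_zero h0 (div_nonneg hp.le hr.le) (div_le_one_of_le₀ hpr hr.le) r
  rw [div_mul_cancel₀ p hr.ne', hfp, EReal.coe_le_coe_mul_iff (div_pos hp hr)] at h
  rwa [div_div_eq_mul_div, mul_div_right_comm] at h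

lemma convexE_affine (a b : ℝ) : ConvexE (fun r => ((a * r + b : ℝ) : EReal)) := by
  intro x y t _ _
  dsimp only
  rw [show a * (t * x + (1 - t) * y) + b = t * (a * x + b) + (1 - t) * (a * y + b) by ring]
  push_cast
  rfl

lemma coE_le_self (F : ℝ → EReal) (p : ℝ) : coE F p ≤ F p :=
  iSup_le fun g => g.2.2.2 p

lemma affine_le_coE {F : ℝ → EReal} {a b : ℝ} (h : ∀ x, ((a * x + b : ℝ) : EReal) ≤ F x)
    (p : ℝ) : ((a * p + b : ℝ) : EReal) ≤ coE F p :=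
  le_iSup_of_le ⟨_, convexE_affine a b,
    (continuous_coe_real_ereal.comp (by fun_prop)).lowerSemicontinuous, h⟩ le_rfl

lemma mem_subdiffE_coE_iff {F : ℝ → EReal} {p c : ℝ} (hc : coE F p = c) (q : ℝ) :
    q ∈ subdiffE (coE F) p ↔ ∀ r, ((c + q * (r - p) : ℝ) : EReal) ≤ F r := by
  simp only [subdiffE, Set.mem_ofPred_eq, hc, ← EReal.coe_add]
  refine ⟨fun h r => (h r).trans (coE_le_self F r), fun h r => ?_⟩
  have hq := affine_le_coE (a := q) (b := c - q * p) (fun x => by convert h x using 2; ring) r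
  convert hq using 2
  ring

lemma ellL_of_nonpos (L : ℝ) {p : ℝ} (hp : p ≤ 0) : ellL L p = 0 := by
  simp [ellL, hp]

lemma ellL_of_pos_of_le_one (L : ℝ) {p : ℝ} (hp0 : 0 < p) (hp1 : p ≤ 1) : ellL L p = L := by
  simp [ellL, hp0.not_ge, hp1]

lemma affine_le_max_ellL {L p₁ a b : ℝ} {f : ℝ → EReal} (hp₁1 : p₁ ≤ 1) (ha : 0 ≤ a)
    (hb : b ≤ 0) (hp₁ : a * p₁ + b ≤ L) (hf : ∀ r, p₁ < r → ((a * r + b : ℝ) : EReal) ≤ f r)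
    (r : ℝ) : ((a * r + b : ℝ) : EReal) ≤ max (f r) (ellL L r) := by
  rcases le_or_gt r 0 with hr0 | hr0
  · rw [ellL_of_nonpos L hr0]
    exact le_max_of_le_right (EReal.coe_nonpos.2 (by nlinarith))
  rcases le_or_gt r p₁ with hrp | hrp
  · rw [ellL_of_pos_of_le_one L hr0 (hrp.trans hp₁1)]
    exact le_max_of_le_right (EReal.coe_le_coe_iff.2 (by nlinarith))
  · exact le_max_of_le_left (hf r hrp)

section MaxEllL

variable {L p₁ : ℝ} {f : ℝ → EReal}

lemma line_le_max_ellL (hp₁0 : 0 < p₁) (hp₁1 : p₁ ≤ 1)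
    (hline : ∀ r, p₁ ≤ r → ((L / p₁ * r : ℝ) : EReal) ≤ f r) {q : ℝ} (hq0 : 0 ≤ q)
    (hq : q ≤ L / p₁) (r : ℝ) : ((q * r + 0 : ℝ) : EReal) ≤ max (f r) (ellL L r) := by
  refine affine_le_max_ellL hp₁1 hq0 le_rfl ?_ (fun r hr => ?_) r
  · rw [le_div_iff₀ hp₁0] at hq
    linarith
  · refine le_trans (EReal.coe_le_coe_iff.2 ?_) (hline r hr.le)
    nlinarith

lemma coE_max_ellL_zero (hL : 0 ≤ L) (hp₁0 : 0 < p₁) (hp₁1 : p₁ ≤ 1)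
    (hle : ∀ p, p ≤ p₁ → f p ≤ ellL L p)
    (hline : ∀ r, p₁ ≤ r → ((L / p₁ * r : ℝ) : EReal) ≤ f r) :
    coE (fun p => max (f p) (ellL L p)) 0 = ((0 : ℝ) : EReal) := by
  refine le_antisymm ?_ ?_
  · have h := coE_le_self (fun p => max (f p) (ellL L p)) 0
    rwa [max_eq_right (hle _ hp₁0.le), ellL_of_nonpos L le_rfl] at h
  · simpa using affine_le_coE (line_le_max_ellL hp₁0 hp₁1 hline le_rfl (by positivity)) 0

lemma coE_max_ellL_eq (hL : 0 ≤ L) (hp₁0 : 0 < p₁) (hp₁1 : p₁ ≤ 1) (hfp₁ : f p₁ = L)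
    (hline : ∀ r, p₁ ≤ r → ((L / p₁ * r : ℝ) : EReal) ≤ f r) :
    coE (fun p => max (f p) (ellL L p)) p₁ = L := by
  refine le_antisymm ?_ ?_
  · have h := coE_le_self (fun p => max (f p) (ellL L p)) p₁
    rwa [hfp₁, ellL_of_pos_of_le_one L hp₁0 hp₁1, max_self] at h
  · have h := affine_le_coE (line_le_max_ellL hp₁0 hp₁1 hline (by positivity) le_rfl) p₁
    rwa [add_zero, div_mul_cancel₀ L hp₁0.ne'] at h

lemma mem_subdiffE_coE_max_ellL_zero_iff (hL : 0 ≤ L) (hp₁0 : 0 < p₁) (hp₁1 : p₁ ≤ 1)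
    (hle : ∀ p, p ≤ p₁ → f p ≤ ellL L p)
    (hline : ∀ r, p₁ ≤ r → ((L / p₁ * r : ℝ) : EReal) ≤ f r) (q : ℝ) :
    q ∈ subdiffE (coE (fun p => max (f p) (ellL L p))) 0 ↔ 0 ≤ q ∧ q ≤ L / p₁ := by
  rw [mem_subdiffE_coE_iff (coE_max_ellL_zero hL hp₁0 hp₁1 hle hline)]
  refine ⟨fun h => ⟨?_, ?_⟩, fun ⟨hq0, hq⟩ r => ?_⟩
  · have h' := h (-1)
    rw [max_eq_right (hle _ (by linarith)), ellL_of_nonpos L (by norm_num)] at h'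
    linarith [EReal.coe_nonpos.1 h']
  · have h' := h p₁
    rw [max_eq_right (hle _ le_rfl), ellL_of_pos_of_le_one L hp₁0 hp₁1, EReal.coe_le_coe_iff] at h'
    rw [le_div_iff₀ hp₁0]
    linarith
  · convert line_le_max_ellL hp₁0 hp₁1 hline hq0 hq r using 2
    ring

lemma mem_subdiffE_coE_max_ellL_iff (hL : 0 ≤ L) (hp₁0 : 0 < p₁) (hp₁1 : p₁ ≤ 1)
    (hle : ∀ p, p ≤ p₁ → f p ≤ ellL L p) (hge : ∀ p, p₁ ≤ p → ellL L p ≤ f p)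
    (hfp₁ : f p₁ = L) (hline : ∀ r, p₁ ≤ r → ((L / p₁ * r : ℝ) : EReal) ≤ f r) (q : ℝ) :
    q ∈ subdiffE (coE (fun p => max (f p) (ellL L p))) p₁ ↔
      L / p₁ ≤ q ∧ (q : EReal) ≤ rightDE f p₁ := by
  rw [mem_subdiffE_coE_iff (coE_max_ellL_eq hL hp₁0 hp₁1 hfp₁ hline), le_rightDE_iff hfp₁]
  refine ⟨fun h => ⟨?_, fun s hs => ?_⟩, fun ⟨hq, hslope⟩ r => ?_⟩
  · have h' := h 0
    rw [max_eq_right (hle _ hp₁0.le), ellL_of_nonpos L le_rfl, EReal.coe_nonpos] at h'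
    rw [div_le_iff₀ hp₁0]
    linarith
  · have h' := h (p₁ + s)
    rwa [max_eq_left (hge _ (by linarith)), add_sub_cancel_left] at h'
  · have hq0 : 0 ≤ q := (div_nonneg hL hp₁0.le).trans hq
    rw [div_le_iff₀ hp₁0] at hq
    convert affine_le_max_ellL (L := L) (b := L - q * p₁) hp₁1 hq0 (by linarith) (by linarith)
      (fun r hr => ?_) r using 2
    · ring
    · convert hslope (r - p₁) (by linarith) using 2
      · ring
      · rw [add_sub_cancel]

end MaxEllL

theorem subdiff_convex_env_max_ellL_general
    (L : ℝ) (hL : 0 ≤ L) (p₁ : ℝ) (hp₁0 : 0 < p₁) (hp₁1 : p₁ ≤ 1)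
    (f : ℝ → EReal) (hconv : ConvexE f)
    (hf0 : f 0 = 0)
    (hge : ∀ p : ℝ, p₁ ≤ p → ellL L p ≤ f p)
    (hle : ∀ p : ℝ, p ≤ p₁ → f p ≤ ellL L p)
    (q₁ : ℝ) (hq₁ : q₁ = L / p₁) :
    subdiffE (coE (fun p => max (f p) (ellL L p))) 0 = Set.Icc 0 q₁ ∧
    (rightDE f p₁ < ⊤ →
      subdiffE (coE (fun p => max (f p) (ellL L p))) p₁
        = Set.Icc q₁ (rightDE f p₁).toReal) ∧
    (rightDE f p₁ = ⊤ →
      subdiffE (coE (fun p => max (f p) (ellL L p))) p₁ = Set.Ici q₁) := by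
  subst hq₁
  have hellp₁ := ellL_of_pos_of_le_one L hp₁0 hp₁1
  have hfp₁ : f p₁ = L := le_antisymm (hellp₁ ▸ hle p₁ le_rfl) (hellp₁ ▸ hge p₁ le_rfl)
  have hline : ∀ r, p₁ ≤ r → ((L / p₁ * r : ℝ) : EReal) ≤ f r :=
    fun r => hconv.div_mul_le_of_map_zero hf0 hp₁0 hfp₁
  have hmem := mem_subdiffE_coE_max_ellL_iff hL hp₁0 hp₁1 hle hge hfp₁ hline
  refine ⟨Set.ext (mem_subdiffE_coE_max_ellL_zero_iff hL hp₁0 hp₁1 hle hline),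
    fun hlt => Set.ext fun q => ?_, fun htop => Set.ext fun q => by simp [hmem, htop]⟩
  have hq₁D : ((L / p₁ : ℝ) : EReal) ≤ rightDE f p₁ :=
    (le_rightDE_iff hfp₁ _).2 fun h hh => by
      convert hline (p₁ + h) (by linarith) using 2
      field_simp
  rw [hmem, Set.mem_Icc, ← EReal.coe_le_coe_iff (x := q),
    EReal.coe_toReal hlt.ne (ne_bot_of_le_ne_bot (EReal.coe_ne_bot _) hq₁D)]

/-- **Step 2 of the proof of Lemma 3.1** (items (i) and (ii)): with
`ψ := co (f ∨ ℓ_L)`, the subdifferential of `ψ` at `0` is `[0, q₁]`, and the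
subdifferential of `ψ` at `p₁` is `[q₁, D⁺f(p₁)]` if `D⁺f(p₁) < +∞` and `[q₁, ∞)`
otherwise. -/
theorem subdiff_convex_env_max_ellL
    (L : ℝ) (hL : 0 ≤ L) (p₁ : ℝ) (hp₁0 : 0 < p₁) (hp₁1 : p₁ ≤ 1)
    (f : ℝ → EReal) (hfbot : ∀ p, f p ≠ ⊥) (hmono : Monotone f) (hconv : ConvexE f)
    (hf0 : f 0 = 0)
    (hge : ∀ p : ℝ, p₁ ≤ p → ellL L p ≤ f p)
    (hle : ∀ p : ℝ, p ≤ p₁ → f p ≤ ellL L p)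
    (q₁ : ℝ) (hq₁ : q₁ = L / p₁) :
    subdiffE (coE (fun p => max (f p) (ellL L p))) 0 = Set.Icc 0 q₁ ∧
    (rightDE f p₁ < ⊤ →
      subdiffE (coE (fun p => max (f p) (ellL L p))) p₁
        = Set.Icc q₁ (rightDE f p₁).toReal) ∧
    (rightDE f p₁ = ⊤ →
      subdiffE (coE (fun p => max (f p) (ellL L p))) p₁ = Set.Ici q₁) :=
  subdiff_convex_env_max_ellL_general L hL p₁ hp₁0 hp₁1 f hconv hf0 hge hle q₁ hq₁
end
end

section
/- Let L ≥ 0 and let f : ℝ → [0,∞] be convex, non-decreasing, with f(0) = 0, f finite and continuous on (-∞,1], f(p) = +∞ for p > 1, and f(1) ≥ L. Then the set {p ∈ ℝ : f(p) = L} is nonempty; define p_ℓ := min(sup{p ∈ ℝ : f(p) = L}, 1), q_ℓ := L/p_ℓ if p_ℓ > 0 and q_ℓ := 0 otherwise, and ζ : ℝ → [0,∞] by ζ(p) = 0 for p < 0, ζ(p) = q_ℓ·p for 0 ≤ p ≤ 1, and ζ(p) = +∞ for p > 1. Then (f ∨ ℓ_L)^{♯♯} = co(f ∨ ℓ_L)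 = f ∨ ζ, and this function is continuous on (-∞,1]. -/
open scoped Classical
noncomputable section

/-!
Write `g := f ∨ ℓ_L` and `h := f ∨ ζ`. Everything follows from the cycle
`h ≤ h^♯♯ ≤ g^♯♯ ≤ co g ≤ h`.

* `h ≤ g`: on `(0, p_ℓ)` the line `q_ℓ p` stays below `L = ℓ_L`, and on `[p_ℓ, 1]` it stays
  below `f`, because `f` is convex with `f 0 = 0` and `f p_ℓ = L`.
* `h ≤ h^♯♯` (Fenchel–Moreau for `h`): `h` is the supremum of its affine minorants. At `p < 1`
  these are subgradient lines; at `p ≥ 1` they are lines through `(1, y)` so steep that they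
  pass under `h ≥ 0` left of `1`, where `y < h 1` uses the continuity of `h` at `1` from the
  left, and `y = 0` suffices for `p > 1`.
* `g^♯♯ ≤ co g`: every affine minorant of `g` is a closed convex minorant.
* `co g ≤ h`: on `(0, p_ℓ)` a convex minorant of `g` lies below the chord of `g` from `(0, 0)`
  to `(p_ℓ, L)`, which is `ζ`; elsewhere `g = f`.
-/

open Set

theorem ConvexE.sup {f g : ℝ → EReal} (hf : ConvexE f) (hg : ConvexE g) :
    ConvexE (fun p => max (f p) (g p)) := by
  intro x y t ht0 ht1
  have ht : (0 : EReal) ≤ t := by exact_mod_cast ht0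
  have ht' : (0 : EReal) ≤ ((1 - t : ℝ) : EReal) := by exact_mod_cast sub_nonneg.2 ht1
  exact max_le
    ((hf x y t ht0 ht1).trans (add_le_add (mul_le_mul_of_nonneg_left (le_max_left _ _) ht)
      (mul_le_mul_of_nonneg_left (le_max_left _ _) ht')))
    ((hg x y t ht0 ht1).trans (add_le_add (mul_le_mul_of_nonneg_left (le_max_right _ _) ht)
      (mul_le_mul_of_nonneg_left (le_max_right _ _) ht')))

theorem convexE_ite_top {s : Set ℝ} {φ : ℝ → ℝ} (hφ : ConvexOn ℝ s φ) :
    ConvexE (fun p => if p ∈ s then (φ p : EReal) else ⊤) := by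
  intro x y t ht0 ht1
  dsimp only
  have hne_bot : ∀ {a : ℝ}, 0 ≤ a → ∀ z : ℝ,
      (a : EReal) * (if z ∈ s then (φ z : EReal) else ⊤) ≠ ⊥ := by
    intro a ha z
    split_ifs
    · exact_mod_cast EReal.coe_ne_bot (a * φ z)
    · rcases ha.lt_or_eq with ha | rfl
      · simp [EReal.coe_mul_top_of_pos ha]
      · simp
  by_cases hx : x ∈ s
  · by_cases hy : y ∈ s
    · have hxy : t * x + (1 - t) * y ∈ s := hφ.1 hx hy ht0 (sub_nonneg.2 ht1) (by ring)
      simp only [hx, hy, hxy, if_true]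
      exact_mod_cast hφ.2 hx hy ht0 (sub_nonneg.2 ht1) (by ring)
    rcases ht1.lt_or_eq with ht1 | rfl
    · rw [if_neg hy, EReal.coe_mul_top_of_pos (sub_pos.2 ht1),
        EReal.add_top_of_ne_bot (hne_bot ht0 x)]
      exact le_top
    · simp [hx]
  rcases ht0.lt_or_eq with ht0 | rfl
  · rw [if_neg hx, EReal.coe_mul_top_of_pos ht0,
      EReal.top_add_of_ne_bot (hne_bot (sub_nonneg.2 ht1) y)]
    exact le_top
  · simp

theorem ConvexE.apply_mul_le {k : ℝ → EReal} (hk : ConvexE k) (hk0 : k 0 ≤ 0) {t : ℝ}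
    (ht0 : 0 ≤ t) (ht1 : t ≤ 1) (x : ℝ) : k (t * x) ≤ t * k x := by
  have hcomb := hk x 0 t ht0 ht1
  rw [mul_zero, add_zero] at hcomb
  have hzero : ((1 - t : ℝ) : EReal) * k 0 ≤ 0 :=
    (mul_le_mul_of_nonneg_left hk0 (by exact_mod_cast sub_nonneg.2 ht1)).trans_eq (mul_zero _)
  exact hcomb.trans ((add_le_add_right hzero _).trans_eq (add_zero _))

theorem ConvexE.le_div_mul {k : ℝ → EReal} (hk : ConvexE k) (hk0 : k 0 ≤ 0) {L p₀ p : ℝ}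
    (hkp₀ : k p₀ ≤ L) (hp₀ : 0 < p₀) (hp0 : 0 ≤ p) (hp : p ≤ p₀) :
    k p ≤ ((L / p₀ * p : ℝ) : EReal) :=
  calc k p = k (p / p₀ * p₀) := by rw [div_mul_cancel₀ _ hp₀.ne']
    _ ≤ ((p / p₀ : ℝ) : EReal) * k p₀ :=
      hk.apply_mul_le hk0 (div_nonneg hp0 hp₀.le) ((div_le_one hp₀).2 hp) p₀
    _ ≤ ((p / p₀ : ℝ) : EReal) * L :=
      mul_le_mul_of_nonneg_left hkp₀ (EReal.coe_nonneg.2 (div_nonneg hp0 hp₀.le))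
    _ = ((L / p₀ * p : ℝ) : EReal) := by rw [← EReal.coe_mul]; ring_nf

theorem ConvexE.div_mul_le {f : ℝ → EReal} (hf : ConvexE f) (hf0 : f 0 ≤ 0) {L p₀ p : ℝ}
    (hfp₀ : f p₀ = L) (hp₀ : 0 < p₀) (hp : p₀ ≤ p) : ((L / p₀ * p : ℝ) : EReal) ≤ f p := by
  have hp0 : 0 < p := hp₀.trans_le hp
  have key := hf.apply_mul_le hf0 (div_nonneg hp₀.le hp0.le) ((div_le_one hp0).2 hp) p
  rw [div_mul_cancel₀ _ hp0.ne', hfp₀] at key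
  calc ((L / p₀ * p : ℝ) : EReal) = ((p / p₀ : ℝ) : EReal) * L := by
        rw [← EReal.coe_mul]; ring_nf
    _ ≤ ((p / p₀ : ℝ) : EReal) * (((p₀ / p : ℝ) : EReal) * f p) :=
      mul_le_mul_of_nonneg_left key (EReal.coe_nonneg.2 (div_nonneg hp0.le hp₀.le))
    _ = f p := by
      rw [← mul_assoc, ← EReal.coe_mul, show p / p₀ * (p₀ / p) = 1 by field_simp, EReal.coe_one,
        one_mul]

theorem ConvexOn.exists_affine_le_of_mem_interior {S : Set ℝ} {φ : ℝ → ℝ}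
    (hφ : ConvexOn ℝ S φ) {p : ℝ} (hp : p ∈ interior S) :
    ∃ d : ℝ, ∀ r ∈ S, φ p + d * (r - p) ≤ φ r := by
  refine ⟨derivWithin φ (Ioi p) p, fun r hr => ?_⟩
  rcases lt_trichotomy r p with hrp | rfl | hpr
  · have h := (hφ.slope_le_leftDeriv_of_mem_interior hr hp hrp).trans
      (hφ.leftDeriv_le_rightDeriv_of_mem_interior hp)
    rw [slope_def_field, div_le_iff₀ (sub_pos.2 hrp)] at h
    linarith
  · simp
  · have h := hφ.rightDeriv_le_slope_of_mem_interior hp hr hpr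
    rw [slope_def_field, le_div_iff₀ (sub_pos.2 hpr)] at h
    linarith

theorem ConvexE.convexOn_toReal {h : ℝ → EReal} (hc : ConvexE h) {s : Set ℝ}
    (hs : Convex ℝ s) (hfin : ∀ r ∈ s, h r ≠ ⊤) (hbot : ∀ r ∈ s, h r ≠ ⊥) :
    ConvexOn ℝ s (fun r => (h r).toReal) := by
  refine ⟨hs, fun x hx y hy a b ha hb hab => ?_⟩
  obtain rfl : b = 1 - a := by linarith
  have hxy : a • x + (1 - a) • y ∈ s := hs hx hy ha hb hab
  have key := hc x y a ha (by linarith)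
  simp only [smul_eq_mul] at hxy ⊢
  rw [← EReal.coe_toReal (hfin x hx) (hbot x hx), ← EReal.coe_toReal (hfin y hy) (hbot y hy),
    ← EReal.coe_toReal (hfin _ hxy) (hbot _ hxy)] at key
  exact_mod_cast key

theorem ConvexE.subdiffE_nonempty {h : ℝ → EReal} (hc : ConvexE h)
    (hfin : ∀ r, r ≤ 1 → h r ≠ ⊤) (hbot : ∀ r, h r ≠ ⊥) (htop : ∀ r, 1 < r → h r = ⊤)
    {p : ℝ} (hp : p < 1) : (subdiffE h p).Nonempty := by
  have hcoe : ∀ r, r ≤ 1 → ((h r).toReal : EReal) = h r :=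
    fun r hr => EReal.coe_toReal (hfin r hr) (hbot r)
  obtain ⟨d, hd⟩ := (hc.convexOn_toReal (convex_Iic 1) hfin fun r _ => hbot r)
    |>.exists_affine_le_of_mem_interior (by rwa [interior_Iic])
  refine ⟨d, fun r => ?_⟩
  rcases le_or_gt r 1 with hr | hr
  · rw [← hcoe p hp.le, ← hcoe r hr]
    exact_mod_cast hd r hr
  · simp [htop r hr]

theorem fconj_antitone : Antitone fconj := fun _ _ hgg' _ =>
  iSup_mono fun p => EReal.sub_le_sub le_rfl (hgg' p)

theorem fconj_le_iff_forall_affine_le {h : ℝ → EReal} {s c : ℝ} :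
    fconj h s ≤ c ↔ ∀ r, ((s * r - c : ℝ) : EReal) ≤ h r := by
  refine iSup_le_iff.trans (forall_congr' fun r => ?_)
  rw [EReal.coe_sub,
    EReal.sub_le_iff_le_add (.inr (EReal.coe_ne_top c)) (.inr (EReal.coe_ne_bot c)),
    EReal.sub_le_iff_le_add (.inl (EReal.coe_ne_bot c)) (.inl (EReal.coe_ne_top c)), add_comm,
    mul_comm]

theorem affine_le_fconj_fconj {h : ℝ → EReal} {s c : ℝ}
    (hle : ∀ r, ((s * r - c : ℝ) : EReal) ≤ h r) (p : ℝ) :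
    ((s * p - c : ℝ) : EReal) ≤ fconj (fconj h) p :=
  calc ((s * p - c : ℝ) : EReal) = ((s * p : ℝ) : EReal) - c := EReal.coe_sub _ _
    _ ≤ ((s * p : ℝ) : EReal) - fconj h s :=
      EReal.sub_le_sub le_rfl (fconj_le_iff_forall_affine_le.2 hle)
    _ ≤ fconj (fconj h) p := le_iSup (fun q => ((q * p : ℝ) : EReal) - fconj h q) s

theorem le_fconj_fconj_of_forall_lt {h : ℝ → EReal} {p : ℝ}
    (H : ∀ y : ℝ, (y : EReal) < h p →
      ∃ s c : ℝ, (∀ r, ((s * r - c : ℝ) : EReal) ≤ h r) ∧ y ≤ s * p - c) :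
    h p ≤ fconj (fconj h) p :=
  EReal.ge_of_forall_gt_iff_ge.1 fun y hy => by
    obtain ⟨s, c, hle, hyp⟩ := H y hy
    exact (EReal.coe_le_coe_iff.2 hyp).trans (affine_le_fconj_fconj hle p)

theorem fconj_ne_bot {g : ℝ → EReal} {r₀ : ℝ} (hr₀ : g r₀ ≠ ⊤) (s : ℝ) : fconj g s ≠ ⊥ := by
  refine ne_bot_of_le_ne_bot ?_ (le_iSup (fun r => ((r * s : ℝ) : EReal) - g r) r₀)
  generalize g r₀ = x at hr₀
  induction x with
  | bot => rw [EReal.coe_sub_bot]; exact top_ne_bot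
  | coe x => exact EReal.coe_sub _ x ▸ EReal.coe_ne_bot _
  | top => exact absurd rfl hr₀

theorem fconj_fconj_le_coE {g : ℝ → EReal} {r₀ : ℝ} (hr₀ : g r₀ ≠ ⊤) :
    fconj (fconj g) ≤ coE g := by
  intro p
  refine iSup_le fun s => ?_
  rcases eq_or_ne (fconj g s) ⊤ with htop | hne_top
  · simp [htop]
  set c := (fconj g s).toReal
  have hc : fconj g s = c := (EReal.coe_toReal hne_top (fconj_ne_bot hr₀ s)).symm
  have haff : ConvexE (fun r => ((s * r - c : ℝ) : EReal)) := by
    simpa using convexE_ite_top (s := univ) (φ := fun r => s * r - c) ⟨convex_univ,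
      fun x _ y _ a b _ _ hab => le_of_eq (by simp only [smul_eq_mul]; linear_combination c * hab)⟩
  have hlsc : LowerSemicontinuous (fun r => ((s * r - c : ℝ) : EReal)) :=
    (continuous_coe_real_ereal.comp (by fun_prop)).lowerSemicontinuous
  rw [hc, ← EReal.coe_sub]
  exact le_iSup (fun k : {k : ℝ → EReal // ConvexE k ∧ LowerSemicontinuous k ∧ ∀ x, k x ≤ g x} =>
    k.1 p) ⟨_, haff, hlsc, fconj_le_iff_forall_affine_le.1 hc.le⟩

-- `Q * r - (Q - y)` is the line of slope `Q` through `(1, y)`.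
theorem affine_le_of_forall_Ioc_le {h : ℝ → EReal} (hpos : ∀ r, 0 ≤ h r)
    (htop : ∀ r, 1 < r → h r = ⊤)
    {l y Q : ℝ} (hQ : 0 ≤ Q) (hyQ : y ≤ Q * (1 - l)) (hnear : ∀ r ∈ Ioc l 1, (y : EReal) ≤ h r)
    (r : ℝ) : ((Q * r - (Q - y) : ℝ) : EReal) ≤ h r := by
  rcases le_or_gt r l with hrl | hlr
  · refine le_trans ?_ (hpos r)
    exact_mod_cast (by nlinarith : Q * r - (Q - y) ≤ 0)
  rcases le_or_gt r 1 with hr1 | hr1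
  · refine le_trans ?_ (hnear r ⟨hlr, hr1⟩)
    exact_mod_cast (by nlinarith : Q * r - (Q - y) ≤ y)
  · simp [htop r hr1]

theorem le_fconj_fconj {h : ℝ → EReal} (hconv : ConvexE h) (hpos : ∀ p, 0 ≤ h p)
    (hfin : ∀ p, p ≤ 1 → h p ≠ ⊤) (hcont : ContinuousOn h (Iic 1))
    (htop : ∀ p, 1 < p → h p = ⊤) : h ≤ fconj (fconj h) := by
  have hbot : ∀ p, h p ≠ ⊥ := fun p => ne_bot_of_le_ne_bot EReal.zero_ne_bot (hpos p)
  intro p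
  refine le_fconj_fconj_of_forall_lt fun y hy => ?_
  rcases lt_trichotomy p 1 with hp | rfl | hp
  · obtain ⟨d, hd⟩ := hconv.subdiffE_nonempty hfin hbot htop hp
    obtain ⟨a, ha⟩ : ∃ a : ℝ, h p = a :=
      ⟨_, (EReal.coe_toReal (hfin p hp.le) (hbot p)).symm⟩
    refine ⟨d, d * p - a, fun r => ?_, ?_⟩
    · calc ((d * r - (d * p - a) : ℝ) : EReal) = h p + ((d * (r - p) : ℝ) : EReal) := by
            rw [ha, ← EReal.coe_add]; ring_nf
        _ ≤ h r := hd r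
    · have : y < a := by exact_mod_cast ha ▸ hy
      linarith
  · obtain ⟨l, hl, hnear⟩ :=
      mem_nhdsLE_iff_exists_Ioc_subset.1 (hcont 1 self_mem_Iic (Ioi_mem_nhds hy))
    have hl1 : 0 < 1 - l := sub_pos.2 hl
    refine ⟨max 0 (y / (1 - l)), max 0 (y / (1 - l)) - y,
      affine_le_of_forall_Ioc_le hpos htop (le_max_left _ _) ?_ fun r hr => (hnear hr).le,
      by simp⟩
    rw [← div_le_iff₀ hl1]
    exact le_max_right _ _
  · refine ⟨max 0 (y / (p - 1)), max 0 (y / (p - 1)) - 0,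
      affine_le_of_forall_Ioc_le (l := 0) hpos htop (le_max_left _ _) (by simp)
        (fun r _ => by simpa using hpos r), ?_⟩
    have := le_max_right 0 (y / (p - 1))
    rw [div_le_iff₀ (sub_pos.2 hp)] at this
    linarith

theorem levelSet_nonempty {f : ℝ → EReal} {L : ℝ} (hL : 0 ≤ L) (hf0 : f 0 = 0)
    (hcont : ContinuousOn f (Iic 1)) (hL1 : (L : EReal) ≤ f 1) :
    {p : ℝ | f p = L}.Nonempty := by
  obtain ⟨p, -, hp⟩ := intermediate_value_Icc zero_le_one (hcont.mono Icc_subset_Iic_self)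
    ⟨hf0 ▸ EReal.coe_nonneg.2 hL, hL1⟩
  exact ⟨p, hp⟩

theorem levelSet_subset_Iic {f : ℝ → EReal} {L : ℝ} (htop : ∀ p, 1 < p → f p = ⊤) :
    {p : ℝ | f p = L} ⊆ Iic 1 := fun p hp =>
  not_lt.1 fun h1 => EReal.coe_ne_top L (hp.symm.trans (htop p h1))

theorem isGreatest_levelSet {f : ℝ → EReal} {L : ℝ} (hne : {p : ℝ | f p = L}.Nonempty)
    (hcont : ContinuousOn f (Iic 1)) (htop : ∀ p, 1 < p → f p = ⊤) :
    IsGreatest {p : ℝ | f p = L} (sSup {p : ℝ | f p = L}) := by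
  have hbdd : BddAbove {p : ℝ | f p = L} := ⟨1, levelSet_subset_Iic htop⟩
  have hclosed : IsClosed {p : ℝ | f p = L} := by
    rw [← inter_eq_right.2 (levelSet_subset_Iic htop)]
    exact hcont.preimage_isClosed_of_isClosed isClosed_Iic isClosed_singleton
  exact ⟨hclosed.csSup_mem hne hbdd, fun _ hp => le_csSup hbdd hp⟩

def facelift (q p : ℝ) : EReal :=
  if p < 0 then 0 else if p ≤ 1 then ((q * p : ℝ) : EReal) else ⊤

theorem facelift_eq_ite (q : ℝ) :
    facelift q = fun p => if p ∈ Iic 1 then ((q * max p 0 : ℝ) : EReal) else ⊤ := by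
  funext p
  rcases lt_or_ge p 0 with hp | hp
  · simp [facelift, hp, hp.le.trans zero_le_one, max_eq_right hp.le]
  · simp [facelift, hp.not_gt, max_eq_left hp]

theorem convexE_facelift {q : ℝ} (hq : 0 ≤ q) : ConvexE (facelift q) := by
  rw [facelift_eq_ite]
  exact convexE_ite_top
    (((convexOn_id (convex_Iic 1)).sup (convexOn_const 0 (convex_Iic 1))).smul hq)

theorem continuousOn_facelift (q : ℝ) : ContinuousOn (facelift q) (Iic 1) := by
  have hcont : Continuous fun p : ℝ => ((q * max p 0 : ℝ) : EReal) :=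
    continuous_coe_real_ereal.comp (by fun_prop)
  exact hcont.continuousOn.congr fun p hp => by simp [facelift_eq_ite, hp]

theorem facelift_ne_top (q : ℝ) {p : ℝ} (hp : p ≤ 1) : facelift q p ≠ ⊤ := by
  simp only [facelift_eq_ite, mem_Iic, hp, if_true]
  exact EReal.coe_ne_top _

theorem facelift_eq_top (q : ℝ) {p : ℝ} (hp : 1 < p) : facelift q p = ⊤ := by
  simp [facelift_eq_ite, hp]

theorem sup_facelift_le_sup_ellL {f : ℝ → EReal} {L pℓ qℓ : ℝ} (hpos : ∀ p, 0 ≤ f p)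
    (htop : ∀ p, 1 < p → f p = ⊤) (hq0 : 0 ≤ qℓ) (hqpℓ : qℓ * pℓ = L)
    (hK : ∀ p, pℓ ≤ p → ((qℓ * p : ℝ) : EReal) ≤ f p) :
    (fun p => max (f p) (facelift qℓ p)) ≤ fun p => max (f p) (ellL L p) := by
  intro p
  dsimp only
  refine max_le (le_max_left _ _) ?_
  unfold facelift
  split_ifs with hneg h1
  · exact (hpos p).trans (le_max_left _ _)
  · rcases le_or_gt pℓ p with hp | hp
    · exact (hK p hp).trans (le_max_left _ _)
    rcases (not_lt.1 hneg).eq_or_lt with rfl | hp0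
    · simpa using (hpos 0).trans (le_max_left _ _)
    · refine le_trans ?_ (le_max_right _ _)
      rw [ellL, if_neg hp0.not_ge, if_pos h1, ← hqpℓ]
      exact_mod_cast mul_le_mul_of_nonneg_left hp.le hq0
  · simp [htop p (not_le.1 h1)]

theorem coE_sup_ellL_le {f : ℝ → EReal} {L pℓ qℓ : ℝ} (hpos : ∀ p, 0 ≤ f p)
    (hmono : Monotone f) (hf0 : f 0 = 0) (hfpℓ : f pℓ = L) (hpℓ1 : pℓ ≤ 1)
    (hqpℓ : qℓ * pℓ = L) :
    coE (fun p => max (f p) (ellL L p)) ≤ fun p => max (f p) (facelift qℓ p) := by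
  intro p
  refine iSup_le fun ⟨k, hk, _, hkg⟩ => ?_
  dsimp only
  rcases le_or_gt p 1 with hp1 | hp1
  swap
  · simp [facelift_eq_top qℓ hp1]
  by_cases hchord : 0 < p ∧ p < pℓ
  · obtain ⟨hp0, hppℓ⟩ := hchord
    have hpℓ0 : 0 < pℓ := hp0.trans hppℓ
    have hk0 : k 0 ≤ 0 := by simpa [ellL, hf0] using hkg 0
    have hkpℓ : k pℓ ≤ L := by simpa [ellL, hfpℓ, hpℓ0.not_ge, hpℓ1] using hkg pℓ
    refine (hk.le_div_mul hk0 hkpℓ hpℓ0 hp0.le hppℓ.le).trans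
      (le_of_eq_of_le ?_ (le_max_right _ _))
    rw [facelift, if_neg hp0.not_gt, if_pos hp1, ← hqpℓ, mul_div_cancel_right₀ _ hpℓ0.ne']
  · refine (hkg p).trans ((max_le le_rfl ?_).trans (le_max_left _ _))
    rw [ellL]
    split_ifs with hp0
    · exact hpos p
    · rw [← hfpℓ]
      exact hmono (not_lt.1 fun h => hchord ⟨not_le.1 hp0, h⟩)

theorem levelSet_sup_spec {f : ℝ → EReal} {L pℓ : ℝ} (hL : 0 ≤ L) (hmono : Monotone f)
    (hf0 : f 0 = 0) (hcont : ContinuousOn f (Iic 1)) (htop : ∀ p, 1 < p → f p = ⊤)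
    (hL1 : (L : EReal) ≤ f 1) (hpℓ : pℓ = min (sSup {p : ℝ | f p = L}) 1) :
    f pℓ = L ∧ 0 ≤ pℓ ∧ pℓ ≤ 1 := by
  have hgreatest := isGreatest_levelSet (levelSet_nonempty hL hf0 hcont hL1) hcont htop
  rw [min_eq_left (levelSet_subset_Iic htop hgreatest.1)] at hpℓ
  rw [← hpℓ] at hgreatest
  refine ⟨hgreatest.1, le_of_not_gt fun hneg => hneg.not_ge (hgreatest.2 ?_),
    levelSet_subset_Iic htop hgreatest.1⟩
  have hL0 : L = 0 :=
    le_antisymm (by exact_mod_cast (hgreatest.1 ▸ hf0 ▸ hmono hneg.le : (L : EReal) ≤ 0)) hL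
  simp [hf0, hL0]

theorem faceliftSlope_spec {f : ℝ → EReal} {L pℓ qℓ : ℝ} (hL : 0 ≤ L) (hf0 : f 0 = 0)
    (hfpℓ : f pℓ = L) (hpℓ0 : 0 ≤ pℓ) (hqℓ : qℓ = if 0 < pℓ then L / pℓ else 0) :
    0 ≤ qℓ ∧ qℓ * pℓ = L := by
  rw [hqℓ]
  split_ifs with h
  · exact ⟨div_nonneg hL h.le, div_mul_cancel₀ L h.ne'⟩
  · obtain rfl : pℓ = 0 := le_antisymm (not_lt.1 h) hpℓ0
    rw [hf0] at hfpℓ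
    exact ⟨le_rfl, by simpa using (EReal.coe_eq_zero.1 hfpℓ.symm).symm⟩

theorem faceliftSlope_mul_le {f : ℝ → EReal} {L pℓ qℓ : ℝ} (hpos : ∀ p, 0 ≤ f p)
    (hconv : ConvexE f) (hf0 : f 0 = 0) (hfpℓ : f pℓ = L)
    (hqℓ : qℓ = if 0 < pℓ then L / pℓ else 0) {p : ℝ} (hp : pℓ ≤ p) :
    ((qℓ * p : ℝ) : EReal) ≤ f p := by
  rw [hqℓ]
  split_ifs with h
  · exact hconv.div_mul_le hf0.le hfpℓ h hp
  · simpa using hpos p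

theorem sup_facelift_le_fconj_fconj {f : ℝ → EReal} {q : ℝ} (hq : 0 ≤ q)
    (hpos : ∀ p, 0 ≤ f p) (hconv : ConvexE f) (hfin : ∀ p, p ≤ 1 → f p ≠ ⊤)
    (hcont : ContinuousOn f (Iic 1)) (htop : ∀ p, 1 < p → f p = ⊤) :
    (fun p => max (f p) (facelift q p)) ≤ fconj (fconj fun p => max (f p) (facelift q p)) :=
  le_fconj_fconj (hconv.sup (convexE_facelift hq)) (fun p => (hpos p).trans (le_max_left _ _))
    (fun p hp => (max_lt (hfin p hp).lt_top (facelift_ne_top q hp).lt_top).ne)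
    (hcont.sup (continuousOn_facelift q)) fun p hp => by simp [htop p hp]

/-- **Proposition 3.3(a)**: with `p_ℓ := min(sup{p : f p = L}, 1)`,
`q_ℓ := L/p_ℓ` (or `0` if `p_ℓ = 0`) and the 'facelift'
`ζ(p) = 0` for `p < 0`, `q_ℓ·p` for `0 ≤ p ≤ 1`, `+∞` for `p > 1`, one has
`{p : f p = L} ≠ ∅` and `(f ∨ ℓ_L)^{♯♯} = co (f ∨ ℓ_L) = f ∨ ζ`, the latter being
continuous on `(-∞,1]`. -/
theorem biconj_max_ellL_eq_facelift
    (L : ℝ) (hL : 0 ≤ L) (f : ℝ → EReal)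
    (hpos : ∀ p, 0 ≤ f p) (hconv : ConvexE f) (hmono : Monotone f) (hf0 : f 0 = 0)
    (hfin : ∀ p : ℝ, p ≤ 1 → f p ≠ ⊤) (hcont : ContinuousOn f (Set.Iic 1))
    (htop : ∀ p : ℝ, 1 < p → f p = ⊤) (hL1 : (L : EReal) ≤ f 1)
    (pℓ qℓ : ℝ) (ζ : ℝ → EReal)
    (hpℓ : pℓ = min (sSup {p : ℝ | f p = (L : EReal)}) 1)
    (hqℓ : qℓ = if 0 < pℓ then L / pℓ else 0)
    (hζ : ∀ p : ℝ, ζ p = if p < 0 then 0 else if p ≤ 1 then ((qℓ * p : ℝ) : EReal) else ⊤) :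
    ({p : ℝ | f p = (L : EReal)}).Nonempty ∧
    fconj (fconj (fun p => max (f p) (ellL L p))) = coE (fun p => max (f p) (ellL L p)) ∧
    coE (fun p => max (f p) (ellL L p)) = (fun p => max (f p) (ζ p)) ∧
    ContinuousOn (fun p => max (f p) (ζ p)) (Set.Iic 1) := by
  obtain ⟨hfpℓ, hpℓ0, hpℓ1⟩ := levelSet_sup_spec hL hmono hf0 hcont htop hL1 hpℓ
  obtain ⟨hq0, hqpℓ⟩ := faceliftSlope_spec hL hf0 hfpℓ hpℓ0 hqℓ
  obtain rfl : ζ = facelift qℓ := funext hζ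
  set g := fun p => max (f p) (ellL L p)
  set h := fun p => max (f p) (facelift qℓ p)
  have hhg : h ≤ g := sup_facelift_le_sup_ellL hpos htop hq0 hqpℓ fun _ =>
    faceliftSlope_mul_le hpos hconv hf0 hfpℓ hqℓ
  have hcoE : coE g ≤ h := coE_sup_ellL_le hpos hmono hf0 hfpℓ hpℓ1 hqpℓ
  have hbiconj : fconj (fconj g) ≤ coE g := fconj_fconj_le_coE (r₀ := 0) (by simp [g, ellL, hf0])
  have hh : h ≤ fconj (fconj g) :=
    (sup_facelift_le_fconj_fconj hq0 hpos hconv hfin hcont htop).trans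
      (fconj_antitone (fconj_antitone hhg))
  exact ⟨levelSet_nonempty hL hf0 hcont hL1, le_antisymm hbiconj (hcoE.trans hh),
    le_antisymm hcoE (hh.trans hbiconj), hcont.sup (continuousOn_facelift qℓ)⟩
end
end
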